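/- Let G be a graph, M an acyclic matching in G, V_M the vertices covered by M, N_M the vertices outside V_M with a neighbor in V_M, and G' the graph obtained from G by deleting V_M ∪ N_M. If M' is any acyclic matching in G', then M ∪ M' is an acyclic matching in G of size |M| + |M'|. -/

import Mathlib

/-!
No vertex covered by `M'` is adjacent in `G` to a vertex covered by `M`, so a cycle of `G`
through covered vertices of `M ∪ M'` never crosses between the two sides: it is a cycle of the
forest induced by `M` or of the one induced by `M'` (on which `G` and `G'` agree).
-/

open SimpleGraph

/-- `M` is a matching in `G`: a set of edges of `G`, pairwise disjoint. -/
def IsMatchingSet {V : Type*} (G : SimpleGraph V) (M : Finset (Sym2 V)) : Prop :=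
  (∀ e ∈ M, e ∈ G.edgeSet) ∧
    ∀ e ∈ M, ∀ f ∈ M, e ≠ f → ∀ v : V, v ∈ e → v ∉ f

/-- The set of vertices incident to an edge of `M`. -/
def mVerts {V : Type*} (M : Finset (Sym2 V)) : Set V := {v | ∃ e ∈ M, v ∈ e}

/-- `M` is an acyclic matching in `G`: the subgraph induced by the covered vertices
is a forest. -/
def IsAcyclicMatching {V : Type*} (G : SimpleGraph V) (M : Finset (Sym2 V)) : Prop :=
  IsMatchingSet G M ∧ (G.induce (mVerts M)).IsAcyclic

/-- `M` is an induced matching in `G`: the subgraph induced by the covered vertices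
is 1-regular, i.e. every edge between covered vertices belongs to `M`. -/
def IsInducedMatching {V : Type*} (G : SimpleGraph V) (M : Finset (Sym2 V)) : Prop :=
  IsMatchingSet G M ∧ ∀ v w : V, v ∈ mVerts M → w ∈ mVerts M → G.Adj v w → s(v, w) ∈ M

namespace SimpleGraph

variable {V : Type*} {G : SimpleGraph V}

lemma isAcyclic_induce_iff {s : Set V} :
    (G.induce s).IsAcyclic ↔ ∀ u (c : G.Walk u u), c.IsCycle → ¬ ∀ x ∈ c.support, x ∈ s := by
  constructor
  · intro hs u c hc hcs
    refine hs (c.induce s hcs) ?_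
    have := Walk.isCycle_map_iff_of_injective (p := c.induce s hcs)
      (f := (Embedding.induce (G := G) s).toHom) (Embedding.induce (G := G) s).injective
    rw [Walk.map_induce] at this
    exact this.1 hc
  · intro hs u c hc
    refine hs u (c.map (Embedding.induce (G := G) s).toHom)
      ((Walk.isCycle_map_iff_of_injective (Embedding.induce (G := G) s).injective).2 hc) ?_
    intro x hx
    obtain ⟨y, -, rfl⟩ := List.mem_map.1 (Walk.support_map _ c ▸ hx)
    exact y.2

lemma Walk.mem_left_of_mem_support {A B : Set V} (hAB : ∀ a ∈ A, ∀ b ∈ B, ¬ G.Adj a b)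
    {u v : V} (p : G.Walk u v) (hp : ∀ x ∈ p.support, x ∈ A ∪ B) (hu : u ∈ A) :
    ∀ x ∈ p.support, x ∈ A := by
  classical
  intro x hx
  by_contra hxA
  -- the first exit from `A` along `p` would be an edge from `A` to `B`
  have hsub := p.support_takeUntil_subset_support hx
  obtain ⟨d, hd, hdA, hdB⟩ := (p.takeUntil x hx).exists_boundary_dart A hu hxA
  have hsnd := hsub (dart_snd_mem_support_of_mem_darts _ hd)
  exact hAB _ hdA _ ((hp _ hsnd).resolve_left hdB) d.adj

lemma isAcyclic_induce_union_of_not_adj {A B : Set V} (hA : (G.induce A).IsAcyclic)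
    (hB : (G.induce B).IsAcyclic) (hAB : ∀ a ∈ A, ∀ b ∈ B, ¬ G.Adj a b) :
    (G.induce (A ∪ B)).IsAcyclic := by
  rw [isAcyclic_induce_iff] at hA hB ⊢
  intro u c hc hcs
  rcases hcs u c.start_mem_support with hu | hu
  · exact hA u c hc (c.mem_left_of_mem_support hAB hcs hu)
  · exact hB u c hc (c.mem_left_of_mem_support (fun b hb a ha h => hAB a ha b hb h.symm)
      (fun x hx => (hcs x hx).symm) hu)

end SimpleGraph

section Matchings

variable {V : Type*} {G G' : SimpleGraph V}

lemma mVerts_union [DecidableEq V] (M M' : Finset (Sym2 V)) :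
    mVerts (M ∪ M') = mVerts M ∪ mVerts M' := by
  ext v
  simp only [mVerts, Finset.mem_union, Set.mem_union, Set.mem_ofPred_eq, or_and_right, exists_or]

lemma disjoint_of_disjoint_mVerts {M M' : Finset (Sym2 V)}
    (h : Disjoint (mVerts M) (mVerts M')) : Disjoint M M' :=
  Finset.disjoint_left.2 fun e he he' =>
    Set.disjoint_left.1 h ⟨e, he, e.out_fst_mem⟩ ⟨e, he', e.out_fst_mem⟩

lemma IsMatchingSet.exists_adj {M : Finset (Sym2 V)} (hM : IsMatchingSet G M) {v : V}
    (hv : v ∈ mVerts M) : ∃ w, G.Adj v w := by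
  obtain ⟨e, he, hve⟩ := hv
  refine ⟨Sym2.Mem.other hve, ?_⟩
  rw [← mem_edgeSet, Sym2.other_spec hve]
  exact hM.1 e he

lemma IsMatchingSet.union [DecidableEq V] {M M' : Finset (Sym2 V)} (hM : IsMatchingSet G M)
    (hM' : IsMatchingSet G M') (h : Disjoint (mVerts M) (mVerts M')) :
    IsMatchingSet G (M ∪ M') := by
  refine ⟨fun e he => (Finset.mem_union.1 he).elim (hM.1 e) (hM'.1 e), ?_⟩
  intro e he f hf hef v hve hvf
  rcases Finset.mem_union.1 he with he | he <;> rcases Finset.mem_union.1 hf with hf | hf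
  · exact hM.2 e he f hf hef v hve hvf
  · exact Set.disjoint_left.1 h ⟨e, he, hve⟩ ⟨f, hf, hvf⟩
  · exact Set.disjoint_left.1 h ⟨f, hf, hvf⟩ ⟨e, he, hve⟩
  · exact hM'.2 e he f hf hef v hve hvf

lemma IsAcyclicMatching.union [DecidableEq V] {M M' : Finset (Sym2 V)}
    (hM : IsAcyclicMatching G M) (hM' : IsAcyclicMatching G M')
    (hdisj : Disjoint (mVerts M) (mVerts M'))
    (hcross : ∀ a ∈ mVerts M, ∀ b ∈ mVerts M', ¬ G.Adj a b) :
    IsAcyclicMatching G (M ∪ M') := by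
  refine ⟨hM.1.union hM'.1 hdisj, ?_⟩
  rw [mVerts_union]
  exact isAcyclic_induce_union_of_not_adj hM.2 hM'.2 hcross

lemma IsAcyclicMatching.of_le {M : Finset (Sym2 V)} (hle : G' ≤ G)
    (hind : ∀ a ∈ mVerts M, ∀ b ∈ mVerts M, G.Adj a b → G'.Adj a b)
    (hM : IsAcyclicMatching G' M) : IsAcyclicMatching G M := by
  refine ⟨⟨fun e he => edgeSet_mono hle (hM.1.1 e he), hM.1.2⟩, hM.2.anti ?_⟩
  exact fun a b hab => hind a a.2 b b.2 hab

end Matchings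

theorem acyclicMatching_union_general {V : Type*} [DecidableEq V] (G G' : SimpleGraph V)
    (M M' : Finset (Sym2 V)) (hM : IsAcyclicMatching G M)
    (hG' : ∀ a b : V, G'.Adj a b ↔ G.Adj a b ∧
      a ∉ mVerts M ∪ {w : V | w ∉ mVerts M ∧ ∃ x ∈ mVerts M, G.Adj w x} ∧
      b ∉ mVerts M ∪ {w : V | w ∉ mVerts M ∧ ∃ x ∈ mVerts M, G.Adj w x})
    (hM' : IsAcyclicMatching G' M') :
    IsAcyclicMatching G (M ∪ M') ∧ (M ∪ M').card = M.card + M'.card := by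
  have hle : G' ≤ G := fun a b hab => ((hG' a b).1 hab).1
  have hfar : ∀ b ∈ mVerts M',
      b ∉ mVerts M ∪ {w : V | w ∉ mVerts M ∧ ∃ x ∈ mVerts M, G.Adj w x} := fun b hb =>
    let ⟨w, hbw⟩ := hM'.1.exists_adj hb
    ((hG' b w).1 hbw).2.1
  have hdisj : Disjoint (mVerts M) (mVerts M') :=
    Set.disjoint_right.2 fun b hb hbM => hfar b hb (Or.inl hbM)
  have hcross : ∀ a ∈ mVerts M, ∀ b ∈ mVerts M', ¬ G.Adj a b := fun a ha b hb hab =>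
    hfar b hb (Or.inr ⟨Set.disjoint_right.1 hdisj hb, a, ha, hab.symm⟩)
  have hM'G : IsAcyclicMatching G M' :=
    hM'.of_le hle fun a ha b hb hab => (hG' a b).2 ⟨hab, hfar a ha, hfar b hb⟩
  exact ⟨hM.union hM'G hdisj hcross,
    Finset.card_union_of_disjoint (disjoint_of_disjoint_mVerts hdisj)⟩

theorem acyclicMatching_union {V : Type*} [Fintype V] [DecidableEq V] (G G' : SimpleGraph V)
    (M M' : Finset (Sym2 V)) (hM : IsAcyclicMatching G M)
    (hG' : ∀ a b : V, G'.Adj a b ↔ G.Adj a b ∧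
      a ∉ mVerts M ∪ {w : V | w ∉ mVerts M ∧ ∃ x ∈ mVerts M, G.Adj w x} ∧
      b ∉ mVerts M ∪ {w : V | w ∉ mVerts M ∧ ∃ x ∈ mVerts M, G.Adj w x})
    (hM' : IsAcyclicMatching G' M') :
    IsAcyclicMatching G (M ∪ M') ∧ (M ∪ M').card = M.card + M'.card :=
  acyclicMatching_union_general G G' M M' hM hG' hM'
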